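/- arXiv:1612.08659 — 5 statements merged into one kernel-verified Lean document; each statement's English description precedes it below -/
import Mathlib

section
/- Let W̃ be an extended affine Weyl group, W₁ ≤ W_af and W₂ ≤ W_af special subgroups, Ω₁ ≤ Ω fixing S₁ setwise, W₁' = W₁Ω₁, and W_{1,2} = W₁ ∩ W₂ = W₁' ∩ W₂. Then for every σ ∈ W₁' of minimal length in its double coset W_{1,2}σW_{1,2} and every w₂ ∈ W₂, one has ℓ(σw₂) = ℓ(w₂σ) = ℓ(σ) + ℓ(w₂). -/
/-!
Write `σ = u ρ` with `u ∈ W₁` and `ρ ∈ Ω₁`. Since `Ω₁` acts by length-preserving automorphisms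
stabilizing `W₁`, both identities reduce to a statement inside the Coxeter group: if `u ∈ W₁` is
of minimal length in `(W₁ ∩ W₂) u`, then `ℓ (w u) = ℓ w + ℓ u` for all `w ∈ W₂`. This goes by
induction along a reduced word of `w`: if `s w` is longer than `w` but `s w u` is shorter than
`w u`, the exchange condition deletes a letter of a reduced word of `u`, so the reflection
`w⁻¹ s w ∈ W₁ ∩ W₂` shortens `u`, contradicting minimality.

The exchange condition comes from Tits' permutation representation of `W` on `W × ZMod 2`: it shows
that the parity of the number of occurrences of a reflection in the left inversion sequence of a
word depends only on the element the word represents.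
-/

namespace CoxeterSystem

open List

variable {B : Type*} {M : CoxeterMatrix B} {W : Type*} [Group W] (cs : CoxeterSystem M W)

local prefix:100 "s" => cs.simple
local prefix:100 "π" => cs.wordProd
local prefix:100 "ℓ" => cs.length
local prefix:100 "lis " => cs.leftInvSeq

theorem prod_map_alternatingWord_two_mul {G : Type*} [Monoid G] (f : B → G) (i i' : B)
    (m : ℕ) : ((alternatingWord i i' (2 * m)).map f).prod = (f i * f i') ^ m := by
  induction m with
  | zero => simp [alternatingWord]
  | succ m ih =>
    have hodd : ¬ Even (2 * m + 1) := by simp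
    rw [Nat.mul_succ, alternatingWord_succ', if_neg hodd, alternatingWord_succ',
      if_pos (even_two_mul m), map_cons, map_cons, prod_cons, prod_cons, ih, pow_succ',
      ← mul_assoc]

theorem wordProd_alternatingWord_add_two_mul (i i' : B) (n : ℕ) :
    π (alternatingWord i i' (n + 2 * M i i')) = π (alternatingWord i i' n) := by
  have hdiv : (n + 2 * M i i') / 2 = n / 2 + M i i' := by omega
  simp only [prod_alternatingWord_eq_mul_pow, hdiv, pow_add, simple_mul_simple_pow, mul_one,
    Nat.even_add, even_two_mul, iff_true]

theorem leftInvSeq_alternatingWord_two_mul (i i' : B) :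
    lis (alternatingWord i i' (2 * M i i')) =
      (lis (alternatingWord i i' (2 * M i i'))).take (M i i') ++
        (lis (alternatingWord i i' (2 * M i i'))).take (M i i') := by
  refine ext_getElem (by simp; omega) fun k hk _ => ?_
  rw [getElem_append]
  split_ifs with hkM
  · rw [getElem_take]
  · simp only [length_take, length_leftInvSeq, length_alternatingWord] at hk hkM ⊢
    rw [getElem_take, getElem_leftInvSeq_alternatingWord cs i i' _ k (by omega),
      getElem_leftInvSeq_alternatingWord cs i i' _ _ (by omega), eq_comm,
      ← cs.wordProd_alternatingWord_add_two_mul i' i]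
    congr 2
    have := M.symmetric i i'
    omega

theorem even_count_leftInvSeq_alternatingWord [DecidableEq W] (i i' : B) (t : W) :
    Even ((lis (alternatingWord i i' (2 * M i i'))).count t) := by
  rw [leftInvSeq_alternatingWord_two_mul, count_append]
  exact ⟨_, rfl⟩

section ReflectionRepresentation

variable [DecidableEq W]

theorem involutive_reflectionPerm (i : B) : Function.Involutive
    fun p : W × ZMod 2 => (s i * p.1 * s i, p.2 + if p.1 = s i then 1 else 0) := by
  rintro ⟨t, e⟩
  by_cases ht : t = s i
  · simp [ht, add_assoc, CharTwo.add_self_eq_zero]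
  · simp [ht, mul_assoc, mul_eq_one_iff_eq_inv]

noncomputable def reflectionPerm (i : B) : Equiv.Perm (W × ZMod 2) :=
  (cs.involutive_reflectionPerm i).toPerm

theorem prod_map_reflectionPerm (ω : List B) (t : W) (e : ZMod 2) :
    (ω.map cs.reflectionPerm).prod ((π ω)⁻¹ * t * π ω, e) = (t, e + (lis ω).count t) := by
  induction ω generalizing t with
  | nil => simp
  | cons i ω ih =>
    have hconj : s i * t * s i = s i ↔ s i = t := by
      constructor <;> intro h
      · simpa [mul_assoc] using (congrArg (fun x => s i * x * s i) h).symm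
      · simp [← h]
    have hback : s i * (s i * t * s i) * s i = t := by simp [mul_assoc]
    have hcount : (lis (i :: ω)).count t = (lis ω).count (s i * t * s i) +
        if s i = t then 1 else 0 := by
      have hmap := count_map_of_injective (lis ω) (MulAut.conj (s i)) (MulEquiv.injective _)
        (s i * t * s i)
      rw [MulAut.conj_apply, inv_simple, hback] at hmap
      simp only [leftInvSeq, count_cons, hmap, beq_iff_eq]
    rw [map_cons, prod_cons, Equiv.Perm.mul_apply, wordProd_cons, mul_inv_rev, inv_simple,
      show (π ω)⁻¹ * s i * t * (s i * π ω) = (π ω)⁻¹ * (s i * t * s i) * π ω by group, ih]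
    simp [reflectionPerm, hconj, hcount, hback, add_assoc]

theorem isLiftable_reflectionPerm : M.IsLiftable cs.reflectionPerm := by
  intro i i'
  ext1 ⟨t, e⟩
  have hπ : π (alternatingWord i i' (2 * M i i')) = 1 := by
    simpa [alternatingWord] using cs.wordProd_alternatingWord_add_two_mul i i' 0
  obtain ⟨c, hc⟩ := cs.even_count_leftInvSeq_alternatingWord i i' t
  have hprod := cs.prod_map_reflectionPerm (alternatingWord i i' (2 * M i i')) t e
  rw [prod_map_alternatingWord_two_mul, hπ, hc] at hprod
  simpa [CharTwo.add_self_eq_zero] using hprod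

theorem cast_count_leftInvSeq_eq_of_wordProd_eq {ω ω' : List B} (h : π ω = π ω') (t : W) :
    ((lis ω).count t : ZMod 2) = (lis ω').count t := by
  have hprod (ω : List B) : (ω.map cs.reflectionPerm).prod =
      cs.lift ⟨_, cs.isLiftable_reflectionPerm⟩ (π ω) := by
    simp [wordProd, map_list_prod, Function.comp_def, lift_apply_simple]
  have key := congrArg (fun f : Equiv.Perm (W × ZMod 2) => f ((π ω)⁻¹ * t * π ω, 0))
    ((hprod ω).trans ((congrArg _ h).trans (hprod ω').symm))
  rw [prod_map_reflectionPerm, h, prod_map_reflectionPerm] at key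
  simpa using congrArg Prod.snd key

end ReflectionRepresentation

theorem exists_eraseIdx_of_length_simple_mul_lt {ω : List B} {i : B}
    (h : ℓ (s i * π ω) < ℓ (π ω)) : ∃ j < ω.length, s i * π ω = π (ω.eraseIdx j) := by
  classical
  obtain ⟨τ, hτ, hτω⟩ := cs.exists_isReduced (s i * π ω)
  have hiτ : π (i :: τ) = π ω := by rw [wordProd_cons, ← hτω, simple_mul_simple_cancel_left]
  have hiτ_reduced : cs.IsReduced (i :: τ) := by
    have hlen := cs.length_simple_mul (π ω) i
    show ℓ (π (i :: τ)) = τ.length + 1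
    rw [hiτ, ← hτ.eq, ← hτω]
    omega
  have hcount : (lis (i :: τ)).count (s i) = 1 :=
    count_eq_one_of_mem hiτ_reduced.nodup_leftInvSeq (by simp [leftInvSeq])
  have hmem : s i ∈ lis ω := by
    by_contra hn
    simpa [count_eq_zero_of_not_mem hn, hcount] using
      cs.cast_count_leftInvSeq_eq_of_wordProd_eq hiτ.symm (s i)
  obtain ⟨j, hj, hji⟩ := mem_iff_getElem.mp hmem
  refine ⟨j, by simpa using hj, ?_⟩
  rw [← getD_leftInvSeq_mul_wordProd, getD_eq_getElem _ _ hj, hji]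


section Parabolic

open Subgroup

theorem wordProd_mem_closure_simple {S : Set B} {ω : List B} (hω : ∀ i ∈ ω, i ∈ S) :
    π ω ∈ closure (cs.simple '' S) :=
  list_prod_mem fun _ hx => by
    obtain ⟨i, hi, rfl⟩ := mem_map.mp hx
    exact subset_closure ⟨i, hω i hi, rfl⟩

theorem apply_mem_closure_simple (f : MulAut W) {S : Set B}
    (hf : ∀ i ∈ S, ∃ j ∈ S, f (cs.simple i) = cs.simple j) {x : W}
    (hx : x ∈ closure (cs.simple '' S)) : f x ∈ closure (cs.simple '' S) := by
  have hmap := mem_map_of_mem f.toMonoidHom hx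
  rw [MonoidHom.map_closure] at hmap
  refine closure_mono ?_ hmap
  rintro _ ⟨_, ⟨i, hi, rfl⟩, rfl⟩
  obtain ⟨j, hj, hij⟩ := hf i hi
  exact ⟨j, hj, hij.symm⟩

theorem exists_isReduced_of_mem_closure_simple {S : Set B} {w : W}
    (hw : w ∈ closure (cs.simple '' S)) :
    ∃ ω, cs.IsReduced ω ∧ (∀ i ∈ ω, i ∈ S) ∧ w = π ω := by
  have step : ∀ i ∈ S, ∀ v : W, (∃ ω, cs.IsReduced ω ∧ (∀ i ∈ ω, i ∈ S) ∧ v = π ω) →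
      ∃ ω, cs.IsReduced ω ∧ (∀ i ∈ ω, i ∈ S) ∧ s i * v = π ω := by
    rintro i hi _ ⟨ω, hω, hωS, rfl⟩
    rcases cs.length_simple_mul (π ω) i with hlen | hlen
    · refine ⟨i :: ω, ?_, by simpa [hi] using hωS, (wordProd_cons ..).symm⟩
      show ℓ (π (i :: ω)) = ω.length + 1
      rw [wordProd_cons, hlen, hω.eq]
    · obtain ⟨j, hj, hji⟩ :=
        cs.exists_eraseIdx_of_length_simple_mul_lt (ω := ω) (i := i) (by omega)
      refine ⟨ω.eraseIdx j, ?_, fun k hk => hωS k ((eraseIdx_sublist ω j).subset hk), hji⟩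
      have herase := length_eraseIdx_add_one hj
      show ℓ (π (ω.eraseIdx j)) = (ω.eraseIdx j).length
      rw [← hji]
      have hωlen := hω.eq
      omega
  induction hw using closure_induction_left with
  | one => exact ⟨[], by simp [IsReduced], by simp, rfl⟩
  | mul_left _ hx _ _ ih =>
    obtain ⟨i, hi, rfl⟩ := hx
    exact step i hi _ ih
  | inv_mul_cancel _ hx _ _ ih =>
    obtain ⟨i, hi, rfl⟩ := hx
    simpa only [inv_simple] using step i hi _ ih

theorem exists_eraseIdx_of_length_simple_mul_mul_lt {i : B} {v : W}
    (hv : ℓ (s i * v) = ℓ v + 1) (ω : List B) (h : ℓ (s i * v * π ω) < ℓ (v * π ω)) :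
    ∃ j < ω.length, s i * v * π ω = v * π (ω.eraseIdx j) := by
  obtain ⟨τ, hτ, rfl⟩ := cs.exists_isReduced v
  obtain ⟨j, hj, hji⟩ := cs.exists_eraseIdx_of_length_simple_mul_lt (ω := τ ++ ω) (i := i)
    (by simpa only [wordProd_append, mul_assoc] using h)
  rw [length_append] at hj
  rcases lt_or_ge j τ.length with hjτ | hjτ
  · rw [eraseIdx_append_of_lt_length hjτ, wordProd_append, wordProd_append, ← mul_assoc] at hji
    have hlen := cs.length_wordProd_le (τ.eraseIdx j)
    have herase := length_eraseIdx_add_one hjτ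
    rw [← mul_right_cancel hji] at hlen
    rw [hτ.eq] at hv
    omega
  · refine ⟨j - τ.length, by omega, ?_⟩
    rwa [eraseIdx_append_of_length_le hjτ, wordProd_append, wordProd_append, ← mul_assoc] at hji

variable {S₁ S₂ : Set B} {u : W}

theorem length_simple_mul_mul_of_minimal (hu : u ∈ closure (cs.simple '' S₁))
    (hmin : ∀ a ∈ closure (cs.simple '' S₁) ⊓ closure (cs.simple '' S₂), ℓ u ≤ ℓ (a * u))
    {v : W} (hv : v ∈ closure (cs.simple '' S₂)) {i : B} (hi : i ∈ S₂)
    (hvi : ℓ (s i * v) = ℓ v + 1) : ℓ (s i * v * u) = ℓ (v * u) + 1 := by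
  obtain ⟨ω, hω, hωS, rfl⟩ := cs.exists_isReduced_of_mem_closure_simple hu
  rcases cs.length_simple_mul (v * π ω) i with hlen | hlen
  · rwa [← mul_assoc] at hlen
  obtain ⟨j, hj, hji⟩ := cs.exists_eraseIdx_of_length_simple_mul_mul_lt hvi ω
    (by rw [mul_assoc]; omega)
  -- the reflection `v⁻¹ * s i * v` lies in both parabolic subgroups and shortens `π ω`
  have ha : v⁻¹ * s i * v * π ω = π (ω.eraseIdx j) := by
    rw [show v⁻¹ * s i * v * π ω = v⁻¹ * (s i * v * π ω) by simp only [mul_assoc], hji,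
      inv_mul_cancel_left]
  have haS₁ : v⁻¹ * s i * v ∈ closure (cs.simple '' S₁) := by
    rw [← mul_inv_cancel_right (v⁻¹ * s i * v) (π ω), ha]
    exact mul_mem (cs.wordProd_mem_closure_simple fun k hk => hωS k (eraseIdx_subset hk))
      (inv_mem hu)
  have haS₂ : v⁻¹ * s i * v ∈ closure (cs.simple '' S₂) :=
    mul_mem (mul_mem (inv_mem hv) (subset_closure ⟨i, hi, rfl⟩)) hv
  have hle := hmin _ ⟨haS₁, haS₂⟩
  have herase := length_eraseIdx_add_one hj
  have hlen' := cs.length_wordProd_le (ω.eraseIdx j)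
  rw [ha, hω.eq] at hle
  omega

theorem length_mul_of_minimal_left (hu : u ∈ closure (cs.simple '' S₁))
    (hmin : ∀ a ∈ closure (cs.simple '' S₁) ⊓ closure (cs.simple '' S₂), ℓ u ≤ ℓ (a * u))
    {w : W} (hw : w ∈ closure (cs.simple '' S₂)) : ℓ (w * u) = ℓ w + ℓ u := by
  obtain ⟨τ, hτ, hτS, rfl⟩ := cs.exists_isReduced_of_mem_closure_simple hw
  rw [hτ.eq]
  clear hw
  induction τ with
  | nil => simp
  | cons i τ ih =>
    have hτ' : cs.IsReduced τ := hτ.drop 1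
    have hiτ : ℓ (s i * π τ) = ℓ (π τ) + 1 := by
      rw [← wordProd_cons, hτ.eq, hτ'.eq, length_cons]
    rw [wordProd_cons, cs.length_simple_mul_mul_of_minimal hu hmin
      (cs.wordProd_mem_closure_simple fun k hk => hτS k (mem_cons_of_mem i hk))
      (hτS i mem_cons_self) hiτ, ih hτ' fun k hk => hτS k (mem_cons_of_mem i hk), length_cons]
    ring

theorem length_mul_of_minimal_right (hu : u ∈ closure (cs.simple '' S₁))
    (hmin : ∀ b ∈ closure (cs.simple '' S₁) ⊓ closure (cs.simple '' S₂), ℓ u ≤ ℓ (u * b))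
    {w : W} (hw : w ∈ closure (cs.simple '' S₂)) : ℓ (u * w) = ℓ u + ℓ w := by
  have hmin' : ∀ a ∈ closure (cs.simple '' S₁) ⊓ closure (cs.simple '' S₂),
      ℓ u⁻¹ ≤ ℓ (a * u⁻¹) := fun a ha => by
    simpa [← length_inv cs (a * u⁻¹)] using hmin a⁻¹ (inv_mem ha)
  rw [← length_inv, mul_inv_rev, cs.length_mul_of_minimal_left (inv_mem hu) hmin' (inv_mem hw),
    length_inv, length_inv, add_comm]

end Parabolic

end CoxeterSystem

namespace SemidirectProduct

variable {N G : Type*} [Group N] [Group G] {φ : G →* MulAut N}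

theorem left_mem_and_right_mem_of_mem_sup {A : Subgroup N} {Q : Subgroup G}
    (hQ : ∀ g ∈ Q, ∀ n ∈ A, φ g n ∈ A) {x : N ⋊[φ] G}
    (hx : x ∈ A.map inl ⊔ Q.map inr) : x.left ∈ A ∧ x.right ∈ Q := by
  let K : Subgroup (N ⋊[φ] G) :=
    { carrier := {x | x.left ∈ A ∧ x.right ∈ Q}
      one_mem' := ⟨A.one_mem, Q.one_mem⟩
      mul_mem' := fun ha hb => ⟨mul_mem ha.1 (hQ _ ha.2 _ hb.1), mul_mem ha.2 hb.2⟩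
      inv_mem' := fun ha => ⟨hQ _ (inv_mem ha.2) _ (inv_mem ha.1), inv_mem ha.2⟩ }
  refine (sup_le ?_ ?_ : A.map inl ⊔ Q.map inr ≤ K) hx
  · rintro _ ⟨n, hn, rfl⟩
    exact ⟨hn, Q.one_mem⟩
  · rintro _ ⟨g, hg, rfl⟩
    exact ⟨A.one_mem, hg⟩

end SemidirectProduct

open SemidirectProduct

/-- With `W₁' = W₁Ω₁` (`Ω₁` stabilizing `S₁`) and
`W_{1,2} = W₁ ∩ W₂`: if `σ ∈ W₁'` is of minimal length in its double coset
`W_{1,2}σW_{1,2}`, then `ℓ(σw₂) = ℓ(w₂σ) = ℓ(σ) + ℓ(w₂)` for all `w₂ ∈ W₂`. -/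
theorem stmt6 {B : Type*} {M : CoxeterMatrix B} {W : Type*} [Group W]
    (cs : CoxeterSystem M W) {Ω : Type*} [Group Ω] (φ : Ω →* MulAut W)
    (hφ : ∀ (ρ : Ω) (v : W), cs.length (φ ρ v) = cs.length v)
    (ℓt : W ⋊[φ] Ω → ℕ) (hℓt : ∀ x, ℓt x = cs.length x.left)
    (S₁ S₂ : Set B) (W₁ W₂ : Subgroup W)
    (hW₁ : W₁ = Subgroup.closure (cs.simple '' S₁))
    (hW₂ : W₂ = Subgroup.closure (cs.simple '' S₂))
    (Ω₁ : Subgroup Ω)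
    (hΩ₁ : ∀ ρ ∈ Ω₁, ∀ i ∈ S₁, ∃ j ∈ S₁, φ ρ (cs.simple i) = cs.simple j)
    (W₁' : Subgroup (W ⋊[φ] Ω))
    (hW₁' : W₁' = Subgroup.map (inl : W →* W ⋊[φ] Ω) W₁ ⊔
        Subgroup.map (inr : Ω →* W ⋊[φ] Ω) Ω₁)
    (W₁₂ : Subgroup W) (hW₁₂ : W₁₂ = W₁ ⊓ W₂)
    (σ : W ⋊[φ] Ω) (hσ : σ ∈ W₁')
    (hmin : ∀ a ∈ W₁₂, ∀ b ∈ W₁₂, ℓt σ ≤ ℓt (inl a * σ * inl b)) :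
    ∀ w₂ ∈ W₂, ℓt (σ * inl w₂) = ℓt σ + cs.length w₂ ∧
      ℓt (inl w₂ * σ) = ℓt σ + cs.length w₂ := by
  subst hW₁ hW₂ hW₁' hW₁₂
  intro w₂ hw₂
  obtain ⟨hu, hρ⟩ := left_mem_and_right_mem_of_mem_sup
    (fun ρ hρ _ => cs.apply_mem_closure_simple (φ ρ) (hΩ₁ ρ hρ)) hσ
  simp only [hℓt, mul_left, mul_right, left_inl, right_inl, one_mul, map_one,
    MulAut.one_apply] at hmin ⊢
  have htwist : ∀ v, cs.length (σ.left * φ σ.right v) =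
      cs.length (φ σ.right⁻¹ σ.left * v) := fun v => by
    rw [← hφ σ.right⁻¹, map_mul, map_inv, MulAut.inv_apply_self]
  constructor
  · rw [htwist, ← hφ σ.right⁻¹ σ.left]
    refine cs.length_mul_of_minimal_right
      (cs.apply_mem_closure_simple (φ σ.right⁻¹) (hΩ₁ _ (inv_mem hρ)) hu) (fun b hb => ?_) hw₂
    rw [← htwist, hφ]
    simpa using hmin 1 (one_mem _) b hb
  · rw [add_comm]
    exact cs.length_mul_of_minimal_left hu (fun a ha => by simpa using hmin a ha 1 (one_mem _))
      hw₂
end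

section
/- In the extended affine Weyl group of type Ã₃ with simple reflections s₀, s₁, s₂, s₃ (indices mod 4, Dynkin diagram a 4-cycle) and Ω = ⟨ω⟩ ≅ C₂ acting by s₀ ↔ s₂, s₁ ↔ s₃: setting W₂' = ⟨s₀, s₂, ω⟩ and W₁ = ⟨s₁, s₃⟩, one has W₂' ∩ W₁ = {1}, yet s₁ and s₃ are distinct elements of W₁ lying in the same W₂'-double coset, namely s₃ = ωs₁ω ∈ W₂'s₁W₂'. Hence the uniqueness of double coset representatives fails when W₂ is allowed to contain a nontrivial subgroup of Ω. -/
open SemidirectProduct Pointwise Equiv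

/-! The finite quotient `s_i ↦ (i i+1)` of the affine Weyl group onto `S₄` extends to
`W ⋊ Ω` by sending `ω` to the rotation `a ↦ a + 2`. Pair it with the action of `Ω` that swaps
the two blocks `{0,1}`, `{2,3}` of `ZMod 4`: on the generators of `W₂' = ⟨s₀, s₂, ω⟩`, and
hence on all of `W₂'`, the permutation of `ZMod 4` moves the blocks exactly as the `Ω`-part
does. Since `s₁`, `s₃` are commuting involutions, `W₁ = {1, s₁, s₃, s₁s₃} ⊆ W`; these elements
would therefore have to fix each block, and only `1` does. -/

theorem Subgroup.eq_one_or_eq_or_eq_or_eq_mul_of_mem_closure_pair {G : Type*} [Group G]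
    {a b : G} (ha : a * a = 1) (hb : b * b = 1) (hab : Commute a b) {x : G}
    (hx : x ∈ Subgroup.closure {a, b}) : x = 1 ∨ x = a ∨ x = b ∨ x = a * b := by
  have ha' : a⁻¹ = a := inv_eq_of_mul_eq_one_right ha
  have hb' : b⁻¹ = b := inv_eq_of_mul_eq_one_right hb
  have key : ∀ z ∈ ({a, b} : Set G), ∀ y, (y = 1 ∨ y = a ∨ y = b ∨ y = a * b) →
      z * y = 1 ∨ z * y = a ∨ z * y = b ∨ z * y = a * b := by
    have haa : ∀ y, a * (a * y) = y := fun y => by rw [← mul_assoc, ha, one_mul]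
    have hba : ∀ y, b * (a * y) = a * (b * y) := fun y => by
      rw [← mul_assoc, ← hab.eq, mul_assoc]
    intro z hz y hy
    rcases hz with hz | hz <;> rcases hy with hy | hy | hy | hy <;> subst hz hy <;>
      simp [haa, hba, hab.eq.symm, ha, hb]
  induction hx using Subgroup.closure_induction_left with
  | one => exact Or.inl rfl
  | mul_left z hz y _ ih => exact key z hz y ih
  | inv_mul_cancel z hz y _ ih =>
    rcases hz with rfl | rfl
    · simpa [ha'] using key z (by simp) y ih
    · simpa [hb'] using key z (by simp) y ih

theorem exists_monoidHom_apply_eq_of_forall_eq_one_or_eq {Ω G : Type*} [Group Ω] [Group G]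
    {ω : Ω} (hΩ : ∀ x : Ω, x = 1 ∨ x = ω) (hω : ω ≠ 1) {g : G} (hg : g * g = 1) :
    ∃ f : Ω →* G, f ω = g := by
  classical
  have hω2 : ω * ω = 1 := (hΩ _).resolve_right fun h => hω (mul_eq_right.mp h)
  refine ⟨{ toFun := fun x => if x = 1 then 1 else g, map_one' := if_pos rfl, map_mul' := ?_ },
    if_neg hω⟩
  intro x y
  rcases hΩ x with rfl | rfl <;> rcases hΩ y with rfl | rfl <;> simp [hω, hω2, hg]

def Equiv.Perm.semiconjSubgroup {α β : Type*} (f : α → β) :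
    Subgroup (Perm α × Perm β) where
  carrier := {p | Function.Semiconj f p.1 p.2}
  one_mem' := Function.Semiconj.id_right
  mul_mem' hp hq := hp.comp_right hq
  inv_mem' {p} hp := hp.inverses_right p.1.right_inv p.2.left_inv

theorem Equiv.Perm.mem_semiconjSubgroup {α β : Type*} {f : α → β} {p : Perm α × Perm β} :
    p ∈ semiconjSubgroup f ↔ ∀ a, f (p.1 a) = p.2 (f a) :=
  Iff.rfl

theorem CoxeterSystem.commute_simple_of_M_eq_two {B W : Type*} [Group W] {M : CoxeterMatrix B}
    (cs : CoxeterSystem M W) {i j : B} (h : M i j = 2) : Commute (cs.simple i) (cs.simple j) := by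
  have hpow := cs.simple_mul_simple_pow i j
  rw [h, pow_two] at hpow
  calc cs.simple i * cs.simple j = (cs.simple i * cs.simple j)⁻¹ :=
        eq_inv_of_mul_eq_one_left hpow
    _ = cs.simple j * cs.simple i := by rw [mul_inv_rev, cs.inv_simple, cs.inv_simple]

namespace AffineA3

def _root_.CoxeterMatrix.IsAffineA3 (M : CoxeterMatrix (ZMod 4)) : Prop :=
  ∀ i j : ZMod 4, M.M i j = if i = j then 1 else if j = i + 1 ∨ i = j + 1 then 3 else 2

def block (a : ZMod 4) : Bool := decide (a = 2 ∨ a = 3)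

variable {M : CoxeterMatrix (ZMod 4)} {W : Type*} [Group W]

theorem isLiftable_swap (hM : M.IsAffineA3) :
    M.IsLiftable (fun i : ZMod 4 => swap i (i + 1)) := by
  intro i j
  rw [hM i j]
  revert i j
  decide

theorem exists_toPerm (hM : M.IsAffineA3) (cs : CoxeterSystem M W) :
    ∃ F : W →* Perm (ZMod 4), ∀ i, F (cs.simple i) = swap i (i + 1) :=
  ⟨cs.lift ⟨_, isLiftable_swap hM⟩, cs.lift_apply_simple (isLiftable_swap hM)⟩

theorem simple_one_ne_simple_three (hM : M.IsAffineA3) (cs : CoxeterSystem M W) :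
    cs.simple 1 ≠ cs.simple 3 := by
  obtain ⟨F, hF⟩ := exists_toPerm hM cs
  intro h
  have := congrArg F h
  rw [hF, hF] at this
  exact absurd this (by decide)

theorem exists_semidirectProduct_toPerm (hM : M.IsAffineA3) (cs : CoxeterSystem M W)
    {Ω : Type*} [Group Ω] {ω : Ω} (hΩ : ∀ x : Ω, x = 1 ∨ x = ω) {φ : Ω →* MulAut W}
    (hω : ∀ i : ZMod 4, φ ω (cs.simple i) = cs.simple (i + 2)) :
    ∃ Φ : W ⋊[φ] Ω →* Perm (ZMod 4) × Perm Bool,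
      (∀ i, Φ (inl (cs.simple i)) = (swap i (i + 1), 1)) ∧
      Φ (inr ω) = (Equiv.addLeft 2, swap false true) := by
  obtain ⟨F, hF⟩ := exists_toPerm hM cs
  have hω1 : ω ≠ 1 := by
    rintro rfl
    have h := hω 1
    rw [map_one, MulAut.one_apply, show (1 : ZMod 4) + 2 = 3 by decide] at h
    exact simple_one_ne_simple_three hM cs h
  obtain ⟨G, hG⟩ := exists_monoidHom_apply_eq_of_forall_eq_one_or_eq hΩ hω1
    (g := ((Equiv.addLeft 2 : Perm (ZMod 4)), swap false true)) (by decide)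
  have hcompat : ∀ g, (F.prod 1).comp (φ g).toMonoidHom =
      (MulAut.conj (G g)).toMonoidHom.comp (F.prod 1) := by
    intro g
    apply cs.ext_simple
    intro i
    rcases hΩ g with rfl | rfl
    · simp
    · simp only [MonoidHom.comp_apply, MulEquiv.coe_toMonoidHom, MulAut.conj_apply,
        MonoidHom.prod_apply, MonoidHom.one_apply, hω, hF, hG]
      revert i
      decide
  exact ⟨lift (F.prod 1) G hcompat, fun i => by simp [hF], by simp [hG]⟩

theorem closure_inf_closure_eq_bot (hM : M.IsAffineA3) (cs : CoxeterSystem M W)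
    {Ω : Type*} [Group Ω] {ω : Ω} (hΩ : ∀ x : Ω, x = 1 ∨ x = ω) {φ : Ω →* MulAut W}
    (hω : ∀ i : ZMod 4, φ ω (cs.simple i) = cs.simple (i + 2)) :
    Subgroup.closure {inl (cs.simple 0), inl (cs.simple 2), inr ω} ⊓
      Subgroup.closure {inl (cs.simple 1), inl (cs.simple 3)} =
        (⊥ : Subgroup (W ⋊[φ] Ω)) := by
  obtain ⟨Φ, hΦs, hΦω⟩ := exists_semidirectProduct_toPerm hM cs hΩ hω
  have hW₂'_le : Subgroup.closure {inl (cs.simple 0), inl (cs.simple 2), inr ω} ≤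
      (Perm.semiconjSubgroup block).comap Φ := by
    rw [Subgroup.closure_le]
    rintro x (rfl | rfl | rfl) <;>
      simp only [SetLike.mem_coe, Subgroup.mem_comap, Perm.mem_semiconjSubgroup, hΦs, hΦω] <;>
      decide
  have hinvol (i : ZMod 4) : (inl (cs.simple i) : W ⋊[φ] Ω) * inl (cs.simple i) = 1 := by
    rw [← map_mul, cs.simple_mul_simple_self, map_one]
  have hcomm : Commute (inl (cs.simple 1) : W ⋊[φ] Ω) (inl (cs.simple 3)) :=
    (cs.commute_simple_of_M_eq_two (by rw [hM]; decide)).map inl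
  rw [eq_bot_iff]
  rintro x ⟨hx₂, hx₁⟩
  have hΦx := hW₂'_le hx₂
  rcases Subgroup.eq_one_or_eq_or_eq_or_eq_mul_of_mem_closure_pair (hinvol 1) (hinvol 3) hcomm hx₁
    with rfl | rfl | rfl | rfl
  · exact one_mem _
  all_goals
    simp only [Subgroup.mem_comap, map_mul, hΦs, Perm.mem_semiconjSubgroup] at hΦx
    exact absurd hΦx (by decide)

end AffineA3

/-- In the extended affine Weyl group of type `Ã₃` (simple
reflections `s₀,s₁,s₂,s₃` indexed by `ZMod 4`, diagram a 4-cycle) with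
`Ω = ⟨ω⟩ ≅ C₂` acting by `s₀ ↔ s₂`, `s₁ ↔ s₃`: for `W₂' = ⟨s₀, s₂, ω⟩` and
`W₁ = ⟨s₁, s₃⟩` one has `s₃ = ωs₁ω`, `s₁ ≠ s₃`, `W₂' ∩ W₁ = 1`, and yet
`s₃ ∈ W₂' s₁ W₂'`; so uniqueness of double coset representatives fails when
`W₂'` contains a nontrivial subgroup of `Ω`. -/
theorem stmt10 {M : CoxeterMatrix (ZMod 4)}
    (hM : ∀ i j : ZMod 4, M.M i j =
      if i = j then 1 else if j = i + 1 ∨ i = j + 1 then 3 else 2)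
    {W : Type*} [Group W] (cs : CoxeterSystem M W)
    {Ω : Type*} [Group Ω] (ω : Ω) (hΩ : ∀ x : Ω, x = 1 ∨ x = ω)
    (hω2 : ω * ω = 1)
    (φ : Ω →* MulAut W)
    (hω : ∀ i : ZMod 4, φ ω (cs.simple i) = cs.simple (i + 2))
    (W₂' W₁ : Subgroup (W ⋊[φ] Ω))
    (hW₂' : W₂' = Subgroup.closure {inl (cs.simple 0), inl (cs.simple 2), inr ω})
    (hW₁ : W₁ = Subgroup.closure {inl (cs.simple 1), inl (cs.simple 3)}) :
    (inl (cs.simple 3) : W ⋊[φ] Ω) = inr ω * inl (cs.simple 1) * inr ω ∧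
    (inl (cs.simple 1) : W ⋊[φ] Ω) ≠ inl (cs.simple 3) ∧
    W₂' ⊓ W₁ = ⊥ ∧
    (inl (cs.simple 3) : W ⋊[φ] Ω) ∈
      (W₂' : Set (W ⋊[φ] Ω)) * ({inl (cs.simple 1)} : Set (W ⋊[φ] Ω)) * (W₂' : Set (W ⋊[φ] Ω)) := by
  subst hW₂' hW₁
  have hconj : (inl (cs.simple 3) : W ⋊[φ] Ω) = inr ω * inl (cs.simple 1) * inr ω := by
    have h := inl_aut (φ := φ) ω (cs.simple 1)
    rwa [hω 1, inv_eq_of_mul_eq_one_right hω2] at h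
  have hω_mem : (inr ω : W ⋊[φ] Ω) ∈
      Subgroup.closure {inl (cs.simple 0), inl (cs.simple 2), inr ω} :=
    Subgroup.subset_closure (by simp)
  exact ⟨hconj, fun h => AffineA3.simple_one_ne_simple_three hM cs (inl_injective h),
    AffineA3.closure_inf_closure_eq_bot hM cs hΩ hω,
    hconj ▸ Set.mul_mem_mul (Set.mul_mem_mul hω_mem rfl) hω_mem⟩
end

section
/- Let G be a group, K₁ and K₂ subgroups such that K₁ ∩ K₂ has finite index in both, with coset decompositions K₁ = ⊔_{j∈J} l_j(K₁∩K₂) and K₂ = ⊔_{i∈I} m_i(K₁∩K₂). Then the function ν_{1,2} := Σ_{i∈I, j∈J} 1_{l_j m_i K₁} : G → ℤ (sum of indicator functions of left cosets) is K₁-bi-invariant, i.e. ν_{1,2}(κ x κ') = ν_{1,2}(x) for all κ, κ' ∈ K₁ and x ∈ G. -/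
open scoped Classical Pointwise

/-!
Summing first over `i`, the coset decomposition of `K₂` shows that `∑ᵢ 1_{l_j m_i K₁}` is the
indicator of `l_j K₂ K₁`, so `ν x` counts the `j` with `l_j⁻¹ x ∈ K₂ K₁`. Right multiplication by
`K₁` preserves `K₂ K₁`, and left multiplication by `κ ∈ K₁` permutes the cosets `l_j (K₁ ∩ K₂)`,
which changes `l_j⁻¹ x` only by a left factor from `K₁ ∩ K₂ ≤ K₂`.
-/

namespace Subgroup

variable {G : Type*} [Group G]

theorem mul_mem_set_mul_left_iff {K L : Subgroup G} {h : G} (hh : h ∈ K) {y : G} :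
    h * y ∈ (K : Set G) * L ↔ y ∈ (K : Set G) * L := by
  simp only [Set.mem_mul, SetLike.mem_coe]
  exact ⟨fun ⟨a, ha, b, hb, hab⟩ =>
      ⟨h⁻¹ * a, K.mul_mem (K.inv_mem hh) ha, b, hb, by rw [mul_assoc, hab, inv_mul_cancel_left]⟩,
    fun ⟨a, ha, b, hb, hab⟩ => ⟨h * a, K.mul_mem hh ha, b, hb, by rw [mul_assoc, hab]⟩⟩

theorem mul_mem_set_mul_right_iff {K L : Subgroup G} {h : G} (hh : h ∈ L) {y : G} :
    y * h ∈ (K : Set G) * L ↔ y ∈ (K : Set G) * L := by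
  simp only [Set.mem_mul, SetLike.mem_coe]
  exact ⟨fun ⟨a, ha, b, hb, hab⟩ =>
      ⟨a, ha, b * h⁻¹, L.mul_mem hb (L.inv_mem hh), by rw [← mul_assoc, hab, mul_inv_cancel_right]⟩,
    fun ⟨a, ha, b, hb, hab⟩ => ⟨a, ha, b * h, L.mul_mem hb hh, by rw [← mul_assoc, hab]⟩⟩

section CosetRepresentatives

variable {ι : Type*} {H K L : Subgroup G} {r : ι → G}

theorem exists_bijective_mul_cosetRep (hr : ∀ i, r i ∈ K)
    (hdec : ∀ x ∈ K, ∃! i, (r i)⁻¹ * x ∈ H) {κ : G} (hκ : κ ∈ K) :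
    ∃ σ : ι → ι, Function.Bijective σ ∧ ∀ i, (r (σ i))⁻¹ * (κ * r i) ∈ H := by
  choose σ hσ hσ_unique using fun i => hdec (κ * r i) (K.mul_mem hκ (hr i))
  refine ⟨σ, ⟨fun i i' hii' => ?_, fun i => ?_⟩, hσ⟩
  · obtain ⟨i₀, -, hi₀⟩ := hdec (r i) (hr i)
    have hi : (r i)⁻¹ * r i ∈ H := by simp
    have hi' : (r i')⁻¹ * r i ∈ H := by
      have h := H.mul_mem (H.inv_mem (hσ i')) (hσ i)
      rwa [hii', show ((r (σ i'))⁻¹ * (κ * r i'))⁻¹ * ((r (σ i'))⁻¹ * (κ * r i))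
        = (r i')⁻¹ * r i by group] at h
    exact (hi₀ i hi).trans (hi₀ i' hi').symm
  · obtain ⟨j, hj, -⟩ := hdec (κ⁻¹ * r i) (K.mul_mem (K.inv_mem hκ) (hr i))
    refine ⟨j, (hσ_unique j i ?_).symm⟩
    simpa [mul_assoc] using H.inv_mem hj

theorem sum_apply_cosetRep_inv_mul_mul [Fintype ι] {M : Type*} [AddCommMonoid M]
    (hr : ∀ i, r i ∈ K) (hdec : ∀ x ∈ K, ∃! i, (r i)⁻¹ * x ∈ H) {f : G → M}
    (hf : ∀ h ∈ H, ∀ y, f (h * y) = f y)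
    {κ : G} (hκ : κ ∈ K) (y : G) :
    ∑ i, f ((r i)⁻¹ * (κ * y)) = ∑ i, f ((r i)⁻¹ * y) := by
  obtain ⟨σ, hσ, hσr⟩ := exists_bijective_mul_cosetRep hr hdec (K.inv_mem hκ)
  refine Fintype.sum_bijective σ hσ _ _ fun i => ?_
  rw [← hf _ (H.inv_mem (hσr i)) ((r (σ i))⁻¹ * y)]
  group

/-- The translates `r i • L` partition `K * L`. -/
theorem sum_ite_cosetRep_inv_mul_mem (hr : ∀ i, r i ∈ K)
    (hdec : ∀ x ∈ K, ∃! i, (r i)⁻¹ * x ∈ L ⊓ K) [Fintype ι] (y : G) :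
    (∑ i, if (r i)⁻¹ * y ∈ L then (1 : ℤ) else 0) = if y ∈ (K : Set G) * L then 1 else 0 := by
  by_cases hy : y ∈ (K : Set G) * L
  · obtain ⟨a, ha, b, hb, rfl⟩ := hy
    obtain ⟨i₀, hi₀, hi₀_unique⟩ := hdec a ha
    have hmem : ∀ i, (r i)⁻¹ * (a * b) ∈ L ↔ i = i₀ := by
      intro i
      constructor
      · intro hi
        refine hi₀_unique i ⟨?_, K.mul_mem (K.inv_mem (hr i)) ha⟩
        simpa [mul_assoc] using L.mul_mem hi (L.inv_mem hb)
      · rintro rfl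
        simpa [mul_assoc] using L.mul_mem hi₀.1 hb
    simp only [hmem, Fintype.sum_ite_eq']
    rw [if_pos ⟨a, ha, b, hb, rfl⟩]
  · rw [if_neg hy]
    refine Finset.sum_eq_zero fun i _ => if_neg fun hi => hy ⟨r i, hr i, _, hi, ?_⟩
    group

end CosetRepresentatives

end Subgroup

open Subgroup

/-- For commensurable subgroups `K₁, K₂` of a group `G` with coset
decompositions `K₁ = ⊔_j l_j(K₁∩K₂)` and `K₂ = ⊔_i m_i(K₁∩K₂)`, the function
`ν_{1,2} = Σ_{i,j} 1_{l_j m_i K₁}` is `K₁`-bi-invariant. -/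
theorem stmt11 {G : Type*} [Group G] (K₁ K₂ : Subgroup G)
    {I J : Type*} [Fintype I] [Fintype J]
    (l : J → G) (m : I → G)
    (hl : ∀ j, l j ∈ K₁) (hm : ∀ i, m i ∈ K₂)
    (hldec : ∀ x ∈ K₁, ∃! j, (l j)⁻¹ * x ∈ K₁ ⊓ K₂)
    (hmdec : ∀ x ∈ K₂, ∃! i, (m i)⁻¹ * x ∈ K₁ ⊓ K₂)
    (ν : G → ℤ)
    (hν : ∀ x, ν x = ∑ i : I, ∑ j : J,
      (if (l j * m i)⁻¹ * x ∈ K₁ then 1 else 0)) :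
    ∀ κ ∈ K₁, ∀ κ' ∈ K₁, ∀ x : G, ν (κ * x * κ') = ν x := by
  intro κ hκ κ' hκ' x
  have hν' : ∀ y, ν y = ∑ j, if (l j)⁻¹ * y ∈ (K₂ : Set G) * K₁ then 1 else 0 := by
    intro y
    simp only [hν, Finset.sum_comm (γ := I), mul_inv_rev, mul_assoc,
      sum_ite_cosetRep_inv_mul_mem hm hmdec]
  have hleft : ∀ h ∈ K₁ ⊓ K₂, ∀ y, (if h * y ∈ (K₂ : Set G) * K₁ then (1 : ℤ) else 0)
      = if y ∈ (K₂ : Set G) * K₁ then 1 else 0 := fun h hh y =>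
    if_congr (mul_mem_set_mul_left_iff hh.2) rfl rfl
  rw [hν', hν', mul_assoc, sum_apply_cosetRep_inv_mul_mul
    (f := fun z => if z ∈ (K₂ : Set G) * K₁ then (1 : ℤ) else 0) hl hldec hleft hκ]
  simp only [← mul_assoc, mul_mem_set_mul_right_iff hκ']
end

section
/- Let G be a group, K₁, K₂ ≤ G commensurable subgroups (K₁∩K₂ of finite index in each), and define the Eichler element ν_{1,2} = Σ_{i,j} 1_{l_j m_i K₁} as above, with K₁κK₁ decomposing into finitely many left K₁-cosets. Then for every κ ∈ G the value of ν_{1,2} at κ equals [K₁ : K₁∩K₂] · |{ i ∈ I : m_iK₁ ⊆ K₁κK₁ }| / |K₁κK₁/K₁|. In particular, ν_{1,2} is supported exactly on the double cosets K₁κK₁ having a representative in K₂. -/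
/-! `ν` is right `K₁`-invariant by construction, and left `K₁`-invariant because left
multiplication by `a ∈ K₁` permutes the cosets `l j • (K₁ ⊓ K₂)` and then, inside `K₂`, the cosets
`m i • (K₁ ⊓ K₂)`; so `ν` is constant on `K₁κK₁`. Hence `∑_{r ∈ R} ν(r) = ν(κ) |R|`, while
exchanging the sums, each coset `l j m i K₁` contains exactly one `r ∈ R` if it lies in `K₁κK₁`
(equivalently `m i ∈ K₁κK₁`) and none otherwise. The support statement follows since `|R|` and
`|J|` are positive and an element `x ∈ K₂ ∩ K₁κK₁` lies in some `m i K₁`. -/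

open scoped Classical Pointwise

open Finset DoubleCoset

section Transversal

variable {G M : Type*} [Group G] [AddCommMonoid M]

/-- Left multiplication by `a ∈ K` permutes the cosets `r i • H`. -/
theorem sum_transversal_inv_mul_mul_left {H K : Subgroup G} {ι : Type*} [Fintype ι]
    {r : ι → G} (hr : ∀ i, r i ∈ K) (hrdec : ∀ x ∈ K, ∃! i, (r i)⁻¹ * x ∈ H)
    (f : G → M) (hf : ∀ h ∈ H, ∀ y, f (h * y) = f y) {a : G} (ha : a ∈ K) (y : G) :
    ∑ i, f ((r i)⁻¹ * (a * y)) = ∑ i, f ((r i)⁻¹ * y) := by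
  choose σ hσ using fun i => (hrdec _ (mul_mem (inv_mem ha) (hr i))).exists
  have hσ_inj : σ.Injective := by
    intro i₁ i₂ h
    have key : ∀ i, (r i)⁻¹ * (a * r (σ i)) ∈ H := fun i => by
      simpa [mul_assoc] using inv_mem (hσ i)
    exact (hrdec _ (mul_mem ha (hr (σ i₁)))).unique (key i₁) (h ▸ key i₂)
  calc ∑ i, f ((r i)⁻¹ * (a * y)) = ∑ i, f ((r (σ i))⁻¹ * y) :=
        sum_congr rfl fun i _ => by rw [← hf _ (hσ i)]; group
    _ = ∑ i, f ((r i)⁻¹ * y) :=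
        (Finite.injective_iff_bijective.mp hσ_inj).sum_comp fun i => f ((r i)⁻¹ * y)

end Transversal

section DoubleCosetStable

variable {G : Type*} [Group G] {H K : Subgroup G} {a x : G}

theorem DoubleCoset.mul_mem_doubleCoset_left {h : G} (hh : h ∈ H)
    (hx : x ∈ doubleCoset a H K) : h * x ∈ doubleCoset a H K := by
  obtain ⟨u, hu, v, hv, rfl⟩ := mem_doubleCoset.1 hx
  exact mem_doubleCoset.2 ⟨h * u, mul_mem hh hu, v, hv, by group⟩

theorem DoubleCoset.mul_mem_doubleCoset_right {k : G} (hk : k ∈ K)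
    (hx : x ∈ doubleCoset a H K) : x * k ∈ doubleCoset a H K := by
  obtain ⟨u, hu, v, hv, rfl⟩ := mem_doubleCoset.1 hx
  exact mem_doubleCoset.2 ⟨u, hu, v * k, mul_mem hv hk, by group⟩

end DoubleCosetStable

theorem card_filter_inv_mul_mem_eq_ite {G : Type*} [Group G] {K : Subgroup G} {C : Set G}
    (hCK : ∀ x ∈ C, ∀ k ∈ K, x * k ∈ C) {R : Finset G} (hR : ∀ r ∈ R, r ∈ C)
    (hRdec : ∀ x ∈ C, ∃! r, r ∈ R ∧ r⁻¹ * x ∈ K) (g : G) :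
    #{r ∈ R | g⁻¹ * r ∈ K} = if g ∈ C then 1 else 0 := by
  split_ifs with hg
  · obtain ⟨r₀, hr₀, huniq⟩ := hRdec g hg
    refine card_eq_one.2 ⟨r₀, ext fun r => ?_⟩
    rw [mem_filter, mem_singleton, ← inv_mem_iff (x := g⁻¹ * r), mul_inv_rev, inv_inv]
    exact ⟨huniq r, fun h => h ▸ hr₀⟩
  · refine card_eq_zero.2 (filter_eq_empty_iff.2 fun r hr hgr => hg ?_)
    simpa using hCK r (hR r hr) _ (inv_mem hgr)

noncomputable def eichler {G : Type*} [Group G] (K₁ : Subgroup G) {I J : Type*}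
    [Fintype I] [Fintype J] (l : J → G) (m : I → G) (x : G) : ℤ :=
  ∑ i, ∑ j, if (l j * m i)⁻¹ * x ∈ K₁ then 1 else 0

section Eichler

variable {G : Type*} [Group G] {K₁ K₂ : Subgroup G} {I J : Type*} [Fintype I] [Fintype J]
  {l : J → G} {m : I → G}

theorem eichler_mul_right {b : G} (hb : b ∈ K₁) (x : G) :
    eichler K₁ l m (x * b) = eichler K₁ l m x := by
  simp only [eichler, ← mul_assoc, mul_mem_cancel_right hb]

theorem eichler_eq_sum_sum_inv_mul (x : G) :
    eichler K₁ l m x = ∑ j, ∑ i, if (m i)⁻¹ * ((l j)⁻¹ * x) ∈ K₁ then 1 else 0 := by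
  simp only [eichler, mul_inv_rev, mul_assoc]
  exact sum_comm

theorem eichler_mul_left (hl : ∀ j, l j ∈ K₁) (hm : ∀ i, m i ∈ K₂)
    (hldec : ∀ x ∈ K₁, ∃! j, (l j)⁻¹ * x ∈ K₁ ⊓ K₂)
    (hmdec : ∀ x ∈ K₂, ∃! i, (m i)⁻¹ * x ∈ K₁ ⊓ K₂) {a : G} (ha : a ∈ K₁) (x : G) :
    eichler K₁ l m (a * x) = eichler K₁ l m x := by
  simp only [eichler_eq_sum_sum_inv_mul]
  refine sum_transversal_inv_mul_mul_left hl hldec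
    (fun y => ∑ i, if (m i)⁻¹ * y ∈ K₁ then (1 : ℤ) else 0) (fun h hh y => ?_) ha x
  refine sum_transversal_inv_mul_mul_left hm hmdec
    (fun z => if z ∈ K₁ then (1 : ℤ) else 0) (fun k hk z => ?_) (Subgroup.mem_inf.1 hh).2 y
  simp only [mul_mem_cancel_left (Subgroup.mem_inf.1 hk).1]

theorem eichler_eq_of_mem_doubleCoset (hl : ∀ j, l j ∈ K₁) (hm : ∀ i, m i ∈ K₂)
    (hldec : ∀ x ∈ K₁, ∃! j, (l j)⁻¹ * x ∈ K₁ ⊓ K₂)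
    (hmdec : ∀ x ∈ K₂, ∃! i, (m i)⁻¹ * x ∈ K₁ ⊓ K₂) {κ x : G}
    (hx : x ∈ doubleCoset κ K₁ K₁) : eichler K₁ l m x = eichler K₁ l m κ := by
  obtain ⟨a, ha, b, hb, rfl⟩ := mem_doubleCoset.1 hx
  rw [eichler_mul_right hb, eichler_mul_left hl hm hldec hmdec ha]

theorem sum_eichler_eq_card_mul_card (hl : ∀ j, l j ∈ K₁) {C : Set G}
    (hCl : ∀ x ∈ C, ∀ a ∈ K₁, a * x ∈ C) (hCr : ∀ x ∈ C, ∀ b ∈ K₁, x * b ∈ C)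
    {R : Finset G} (hR : ∀ r ∈ R, r ∈ C) (hRdec : ∀ x ∈ C, ∃! r, r ∈ R ∧ r⁻¹ * x ∈ K₁) :
    ∑ r ∈ R, eichler K₁ l m r = Fintype.card J * #{i | m i ∈ C} := by
  have hlm : ∀ i j, l j * m i ∈ C ↔ m i ∈ C := fun i j =>
    ⟨fun h => by simpa using hCl _ h _ (inv_mem (hl j)), fun h => hCl _ h _ (hl j)⟩
  calc ∑ r ∈ R, eichler K₁ l m r
      = ∑ i, ∑ j, (#{r ∈ R | (l j * m i)⁻¹ * r ∈ K₁} : ℤ) := by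
        simp only [eichler]
        rw [sum_comm]
        refine sum_congr rfl fun i _ => ?_
        rw [sum_comm]
        simp only [sum_boole]
    _ = ∑ i, ∑ _j : J, if m i ∈ C then 1 else 0 := by
        simp only [card_filter_inv_mul_mem_eq_ite hCr hR hRdec, hlm, Nat.cast_ite, Nat.cast_one,
          Nat.cast_zero]
    _ = Fintype.card J * #{i | m i ∈ C} := by
        simp only [sum_const, card_univ, nsmul_eq_mul, ← mul_sum, sum_boole]

end Eichler

theorem exists_transversal_mem_iff {G : Type*} [Group G] {K₁ K₂ : Subgroup G} {I : Type*}
    {m : I → G} (hm : ∀ i, m i ∈ K₂) (hmdec : ∀ x ∈ K₂, ∃! i, (m i)⁻¹ * x ∈ K₁ ⊓ K₂)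
    {C : Set G} (hCr : ∀ x ∈ C, ∀ b ∈ K₁, x * b ∈ C) :
    (∃ i, m i ∈ C) ↔ ∃ x ∈ K₂, x ∈ C := by
  refine ⟨fun ⟨i, hi⟩ => ⟨m i, hm i, hi⟩, fun ⟨x, hx, hxC⟩ => ?_⟩
  obtain ⟨i, hi, -⟩ := hmdec x hx
  exact ⟨i, by simpa using hCr x hxC _ (inv_mem (Subgroup.mem_inf.1 hi).1)⟩

/-- With `ν_{1,2} = Σ_{i,j} 1_{l_j m_i K₁}` the Eichler element of
commensurable subgroups `K₁, K₂ ≤ G`, and `K₁κK₁` a finite union of left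
`K₁`-cosets, one has
`ν_{1,2}(κ) · |K₁κK₁/K₁| = [K₁:K₁∩K₂] · |{i : m_iK₁ ⊆ K₁κK₁}|`
(here `[K₁:K₁∩K₂] = |J|`); in particular `ν_{1,2}` is supported exactly on the
double cosets having a representative in `K₂`. -/
theorem stmt12 {G : Type*} [Group G] (K₁ K₂ : Subgroup G)
    {I J : Type*} [Fintype I] [Fintype J]
    (l : J → G) (m : I → G)
    (hl : ∀ j, l j ∈ K₁) (hm : ∀ i, m i ∈ K₂)
    (hldec : ∀ x ∈ K₁, ∃! j, (l j)⁻¹ * x ∈ K₁ ⊓ K₂)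
    (hmdec : ∀ x ∈ K₂, ∃! i, (m i)⁻¹ * x ∈ K₁ ⊓ K₂)
    (ν : G → ℤ)
    (hν : ∀ x, ν x = ∑ i : I, ∑ j : J,
      (if (l j * m i)⁻¹ * x ∈ K₁ then 1 else 0))
    (κ : G) (C : Set G) (hC : C = (K₁ : Set G) * {κ} * (K₁ : Set G))
    (R : Finset G) (hR : ∀ r ∈ R, r ∈ C)
    (hRdec : ∀ x ∈ C, ∃! r, r ∈ R ∧ r⁻¹ * x ∈ K₁) :
    ν κ * R.card = (Fintype.card J : ℤ) *
        (Finset.univ.filter fun i : I => ∀ y ∈ K₁, m i * y ∈ C).card ∧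
      (ν κ ≠ 0 ↔ ∃ x ∈ K₂, x ∈ C) := by
  obtain rfl : ν = eichler K₁ l m := funext hν
  obtain rfl : C = doubleCoset κ K₁ K₁ := hC
  have hCl : ∀ x ∈ doubleCoset κ K₁ K₁, ∀ a ∈ K₁, a * x ∈ doubleCoset κ K₁ K₁ :=
    fun _ hx _ ha => mul_mem_doubleCoset_left ha hx
  have hCr : ∀ x ∈ doubleCoset κ K₁ K₁, ∀ b ∈ K₁, x * b ∈ doubleCoset κ K₁ K₁ :=
    fun _ hx _ hb => mul_mem_doubleCoset_right hb hx
  have hfilt : ∀ i, (∀ y ∈ K₁, m i * y ∈ doubleCoset κ K₁ K₁) ↔ m i ∈ doubleCoset κ K₁ K₁ :=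
    fun i => ⟨fun h => by simpa using h 1 (one_mem _), fun h y hy => hCr _ h y hy⟩
  have hcount : eichler K₁ l m κ * #R = Fintype.card J * #{i | m i ∈ doubleCoset κ K₁ K₁} := by
    rw [← sum_eichler_eq_card_mul_card hl hCl hCr hR hRdec,
      sum_congr rfl fun r hr => eichler_eq_of_mem_doubleCoset hl hm hldec hmdec (hR r hr),
      sum_const, nsmul_eq_mul, mul_comm]
  obtain ⟨r, ⟨hr, -⟩, -⟩ := hRdec κ (mem_doubleCoset_self _ _ κ)
  obtain ⟨j, -, -⟩ := hldec 1 (one_mem _)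
  have : Nonempty J := ⟨j⟩
  refine ⟨by simpa only [hfilt] using hcount, ?_⟩
  rw [← exists_transversal_mem_iff hm hmdec hCr, ← mul_ne_zero_iff_right
    (Nat.cast_ne_zero.2 (card_ne_zero_of_mem hr)), hcount]
  simp [Fintype.card_ne_zero]
end

section
/- Let G, K₁, K₂ be as in the setting of intertwining operators, and define T¹₂ : M(V,K₁) → M(V,K₂) by (T¹₂f)(γ) = Σ_{i∈I} f(γm_i), where K₂ = ⊔_{i∈I} m_i(K₁∩K₂). Then T¹₂ is a well-defined linear map (independent of the choice of the m_i), its image lands in M(V,K₂), and T¹₂ and the analogously defined T²₁ : M(V,K₂) → M(V,K₁) are adjoint to each other with respect to the Petersson inner products: ⟨T¹₂f, f'⟩_{M₂} = ⟨f, T²₁f'⟩_{M₁} for all f ∈ M(V,K₁), f' ∈ M(V,K₂). -/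
/-!
Both Petersson products unfold to the same sum `∑_q |Γ'_q|⁻¹ ⟨f q, f' q⟩` over the finer double
cosets `q ∈ P \ G / (K₁ ∩ K₂)`, where `Γ'` is the group `Γ` computed for `K₁ ∩ K₂`. Inside
`x K₂`, the cosets `x mᵢ (K₁ ∩ K₂)` fall into finer double cosets along the orbits of `Γ_x`, and by
orbit–stabilizer the orbit of `x mᵢ` has `|Γ_x| / |Γ'_{x mᵢ}|` elements. Well-definedness and
`K₂`-invariance of `T¹₂ f` both come from left multiplication by `k ∈ K₂` permuting the cosets
`mᵢ (K₁ ∩ K₂)`.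
-/

section AlgebraicModularForms

open Finset

variable {G : Type*} [Group G]

/-- The group `Γ_x = P ∩ x K x⁻¹` weighting the Petersson product; `Nat.card` of it is `0` when
it is infinite. -/
abbrev arithStab (P K : Subgroup G) (x : G) : Type _ :=
  {g : P // x⁻¹ * (g : G) * x ∈ K}

def IsCosetReps {I : Type*} (K Kc : Subgroup G) (m : I → G) : Prop :=
  (∀ i, m i ∈ K) ∧ ∀ x ∈ K, ∃! i, (m i)⁻¹ * x ∈ Kc

def IsDoubleCosetReps {ι : Type*} (P K : Subgroup G) (α : ι → G) : Prop :=
  (∀ x, ∃ i, ∃ g ∈ P, ∃ k ∈ K, x = g * α i * k) ∧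
    ∀ i j, (∃ g ∈ P, ∃ k ∈ K, α j = g * α i * k) → i = j

def IsAlgModularForm {R V : Type*} [CommSemiring R] [AddCommMonoid V] [Module R V]
    {P : Subgroup G} (ρ : Representation R P V) (K : Subgroup G) (f : G → V) : Prop :=
  ∀ (g : P) (γ : G) (k : K), f ((g : G) * γ * (k : G)) = ρ g (f γ)

namespace IsCosetReps

variable {I I' : Type*} {K Kc : Subgroup G} {m : I → G} {m' : I' → G}

theorem exists_bijective (hm : IsCosetReps K Kc m) (hm' : IsCosetReps K Kc m')
    {k : G} (hk : k ∈ K) :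
    ∃ σ : I → I', Function.Bijective σ ∧ ∀ i, (m' (σ i))⁻¹ * (k * m i) ∈ Kc := by
  choose σ hσ hσu using fun i => hm'.2 (k * m i) (mul_mem hk (hm.1 i))
  refine ⟨σ, ⟨fun i j hij => ?_, fun t => ?_⟩, hσ⟩
  · have hmij : (m i)⁻¹ * m j ∈ Kc := by
      have e : ((m' (σ j))⁻¹ * (k * m i))⁻¹ * ((m' (σ j))⁻¹ * (k * m j)) = (m i)⁻¹ * m j := by
        group
      rw [← e, ← hij]
      exact mul_mem (inv_mem (hσ i)) (hij ▸ hσ j)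
    exact (hm.2 (m j) (hm.1 j)).unique hmij (by simp)
  · obtain ⟨i, hi, -⟩ := hm.2 (k⁻¹ * m' t) (mul_mem (inv_mem hk) (hm'.1 t))
    refine ⟨i, (hσu i t ?_).symm⟩
    have e : ((m i)⁻¹ * (k⁻¹ * m' t))⁻¹ = (m' t)⁻¹ * (k * m i) := by group
    show (m' t)⁻¹ * (k * m i) ∈ Kc
    rw [← e]
    exact inv_mem hi

theorem sum_mul_eq {M : Type*} [AddCommMonoid M] [Fintype I] [Fintype I']
    (hm : IsCosetReps K Kc m) (hm' : IsCosetReps K Kc m') {f : G → M}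
    (hf : ∀ γ, ∀ c ∈ Kc, f (γ * c) = f γ) {k : G} (hk : k ∈ K) (γ : G) :
    ∑ i, f (γ * k * m i) = ∑ i', f (γ * m' i') := by
  obtain ⟨σ, hσ, hσm⟩ := hm.exists_bijective hm' hk
  refine Fintype.sum_bijective σ hσ _ _ fun i => ?_
  rw [show γ * k * m i = γ * m' (σ i) * ((m' (σ i))⁻¹ * (k * m i)) by group, hf _ _ (hσm i)]

end IsCosetReps

namespace IsAlgModularForm

variable {R V : Type*} [CommSemiring R] [AddCommMonoid V] [Module R V] {P K : Subgroup G}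
  {ρ : Representation R P V} {f : G → V}

theorem map_mul_right (hf : IsAlgModularForm ρ K f) (γ : G) {k : G} (hk : k ∈ K) :
    f (γ * k) = f γ := by
  simpa using hf 1 γ ⟨k, hk⟩

theorem mono (hf : IsAlgModularForm ρ K f) {K' : Subgroup G} (hK : K' ≤ K) :
    IsAlgModularForm ρ K' f :=
  fun g γ k => hf g γ ⟨k, hK k.2⟩

theorem sum_mul_reps {I : Type*} [Fintype I] {Kc : Subgroup G} {m : I → G}
    (hf : IsAlgModularForm ρ Kc f) (hm : IsCosetReps K Kc m) :
    IsAlgModularForm ρ K fun γ => ∑ i, f (γ * m i) := by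
  intro g γ k
  show ∑ i, f (g * γ * k * m i) = ρ g (∑ i, f (γ * m i))
  rw [map_sum, hm.sum_mul_eq hm (fun γ _ hc => hf.map_mul_right γ hc) k.2]
  refine sum_congr rfl fun i _ => ?_
  simpa [mul_assoc] using hf g (γ * m i) 1

theorem bilin_apply_mul_mul {β : V →ₗ[R] V →ₗ[R] R}
    (hβ : ∀ (g : P) (v w : V), β (ρ g v) (ρ g w) = β v w) {f' : G → V}
    (hf : IsAlgModularForm ρ K f) (hf' : IsAlgModularForm ρ K f') (x : G) {g k : G}
    (hg : g ∈ P) (hk : k ∈ K) :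
    β (f (g * x * k)) (f' (g * x * k)) = β (f x) (f' x) := by
  rw [hf ⟨g, hg⟩ x ⟨k, hk⟩, hf' ⟨g, hg⟩ x ⟨k, hk⟩, hβ]

end IsAlgModularForm

theorem DoubleCoset.apply_out_mk {α : Type*} {H K : Subgroup G} {F : G → α}
    (hF : ∀ x, ∀ h ∈ H, ∀ k ∈ K, F (h * x * k) = F x) (x : G) :
    F (Quotient.out (DoubleCoset.mk H K x)) = F x := by
  obtain ⟨h, k, hh, hk, e⟩ := DoubleCoset.mk_out_eq_mul H K x
  rw [e, hF x h hh k hk]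

section Unfolding

variable {P K Kc : Subgroup G}

theorem natCard_arithStab_mul_mul (K : Subgroup G) {g k : G} (hg : g ∈ P) (hk : k ∈ K)
    (x : G) : Nat.card (arithStab P K (g * x * k)) = Nat.card (arithStab P K x) := by
  refine Nat.card_congr ((MulAut.conj (⟨g, hg⟩ : P)⁻¹).toEquiv.subtypeEquiv fun a => ?_)
  have e : (g * x * k)⁻¹ * (a : G) * (g * x * k) = k⁻¹ * (x⁻¹ * (g⁻¹ * a * g) * x) * k := by
    group
  simp only [MulEquiv.toEquiv_eq_coe, EquivLike.coe_coe, MulAut.conj_apply, inv_inv,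
    Subgroup.coe_mul, Subgroup.coe_inv, e]
  rw [K.mul_mem_cancel_right hk, K.mul_mem_cancel_left (inv_mem hk)]

theorem natCard_arithStab_eq_natCard_fiber_mul (hKc : Kc ≤ K) {I : Type*} {m : I → G}
    (hm : IsCosetReps K Kc m) (x : G) (s₀ : I) :
    Nat.card (arithStab P K x) =
      Nat.card {s // DoubleCoset.mk P Kc (x * m s) = DoubleCoset.mk P Kc (x * m s₀)} *
        Nat.card (arithStab P Kc (x * m s₀)) := by
  choose h hP c hc hxh using fun s : {s // DoubleCoset.mk P Kc (x * m s) =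
      DoubleCoset.mk P Kc (x * m s₀)} => (DoubleCoset.eq P Kc _ _).1 s.2
  have h_inv : ∀ s, (h s)⁻¹ = x * m s * c s * (x * m s₀)⁻¹ := fun s => by
    refine inv_eq_of_mul_eq_one_right ?_
    rw [show h s * (x * m s * c s * (x * m s₀)⁻¹) = h s * (x * m s) * c s * (x * m s₀)⁻¹ by
      group, ← hxh s, mul_inv_cancel]
  have h_mem : ∀ s (g : arithStab P Kc (x * m s₀)), x⁻¹ * ((h s)⁻¹ * g) * x ∈ K := by
    intro s g
    rw [h_inv, show x⁻¹ * (x * m s * c s * (x * m s₀)⁻¹ * g) * x =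
      m s * c s * ((x * m s₀)⁻¹ * g * (x * m s₀)) * (m s₀)⁻¹ by group]
    exact mul_mem (mul_mem (mul_mem (hm.1 _) (hKc (hc _))) (hKc g.2)) (inv_mem (hm.1 s₀))
  -- `(h s)⁻¹ * g` lies in the coset `x * m s * Kc`, which pins down `s`
  have h_idx : ∀ (s : {s // DoubleCoset.mk P Kc (x * m s) = DoubleCoset.mk P Kc (x * m s₀)})
      (g : arithStab P Kc (x * m s₀)),
      (m s)⁻¹ * (x⁻¹ * ((h s)⁻¹ * g) * x * m s₀) ∈ Kc := by
    intro s g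
    rw [h_inv, show (m s)⁻¹ * (x⁻¹ * (x * m s * c s * (x * m s₀)⁻¹ * g) * x * m s₀) =
      c s * ((x * m s₀)⁻¹ * g * (x * m s₀)) by group]
    exact mul_mem (hc _) g.2
  -- orbit–stabilizer: `(s, g) ↦ (h s)⁻¹ * g` is a bijection onto `Γ_x`
  rw [← Nat.card_prod]
  symm
  refine Nat.card_congr (Equiv.ofBijective (fun p => ⟨⟨(h p.1)⁻¹ * p.2,
    mul_mem (inv_mem (hP _)) p.2.1.2⟩, h_mem p.1 p.2⟩) ⟨?_, ?_⟩)
  · rintro ⟨s, g⟩ ⟨t, g'⟩ hst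
    have hG : (h s)⁻¹ * g = (h t)⁻¹ * g' := congrArg (fun z : arithStab P K x => (z : G)) hst
    obtain rfl : s = t := Subtype.ext <| (hm.2 _ (mul_mem (h_mem s g) (hm.1 s₀))).unique
      (h_idx s g) (hG ▸ h_idx t g')
    exact Prod.ext rfl (Subtype.ext (Subtype.ext (mul_left_cancel hG)))
  · rintro ⟨z, hz⟩
    obtain ⟨s, hs, -⟩ := hm.2 (x⁻¹ * z * x * m s₀) (mul_mem hz (hm.1 s₀))
    have hs_fib : DoubleCoset.mk P Kc (x * m s) = DoubleCoset.mk P Kc (x * m s₀) :=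
      (DoubleCoset.eq P Kc _ _).2 ⟨(z : G)⁻¹, inv_mem z.2, _, hs, by group⟩
    refine ⟨(⟨s, hs_fib⟩, ⟨⟨h ⟨s, hs_fib⟩ * z, mul_mem (hP _) z.2⟩, ?_⟩), ?_⟩
    · show (x * m s₀)⁻¹ * (h ⟨s, hs_fib⟩ * z) * (x * m s₀) ∈ Kc
      rw [← inv_inv (h _), h_inv, show (x * m s₀)⁻¹ *
          ((x * m s * c ⟨s, hs_fib⟩ * (x * m s₀)⁻¹)⁻¹ * z) * (x * m s₀) =
        (c ⟨s, hs_fib⟩)⁻¹ * ((m s)⁻¹ * (x⁻¹ * z * x * m s₀)) by group]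
      exact mul_mem (inv_mem (hc _)) hs
    · exact Subtype.ext (Subtype.ext (inv_mul_cancel_left _ _))

variable {R : Type*} [Field R] [CharZero R] {I : Type*} [Fintype I] {m : I → G} {φ : G → R}

theorem inv_natCard_mul_sum_eq_sum_image [DecidableEq (DoubleCoset.Quotient (P : Set G) Kc)]
    (hKc : Kc ≤ K) (hm : IsCosetReps K Kc m)
    (hφ : ∀ x, ∀ g ∈ P, ∀ c ∈ Kc, φ (g * x * c) = φ x) (x : G) :
    (Nat.card (arithStab P K x) : R)⁻¹ * ∑ s, φ (x * m s) =
      ∑ q ∈ univ.image fun s => DoubleCoset.mk P Kc (x * m s),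
        (Nat.card (arithStab P Kc q.out) : R)⁻¹ * φ q.out := by
  rw [mul_sum]
  refine (sum_image' _ fun s₀ _ => ?_).symm
  rw [DoubleCoset.apply_out_mk (F := fun y => (Nat.card (arithStab P Kc y) : R)⁻¹ * φ y)
    (fun y g hg c hc => by simp only [natCard_arithStab_mul_mul Kc hg hc, hφ y g hg c hc])]
  have h_const : ∀ s ∈ univ.filter fun s => DoubleCoset.mk P Kc (x * m s) =
      DoubleCoset.mk P Kc (x * m s₀), φ (x * m s) = φ (x * m s₀) := fun s hs => by
    obtain ⟨g, hg, c, hc, e⟩ := (DoubleCoset.eq P Kc _ _).1 (mem_filter.1 hs).2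
    rw [e, hφ _ g hg c hc]
  have h_fiber : (#(univ.filter fun s => DoubleCoset.mk P Kc (x * m s) =
      DoubleCoset.mk P Kc (x * m s₀)) : R) ≠ 0 :=
    Nat.cast_ne_zero.2 (card_ne_zero_of_mem (mem_filter.2 ⟨mem_univ s₀, rfl⟩))
  rw [sum_congr rfl fun s hs => by rw [h_const s hs], sum_const,
    natCard_arithStab_eq_natCard_fiber_mul hKc hm x s₀,
    Nat.card_eq_fintype_card (α := {s : I // _}), Fintype.card_subtype, nsmul_eq_mul, Nat.cast_mul, mul_inv, ← mul_assoc, ← mul_assoc,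
    mul_inv_cancel₀ h_fiber, one_mul]

theorem sum_inv_natCard_mul_sum_eq_finsum {ι : Type*} [Fintype ι] (hKc : Kc ≤ K)
    (hm : IsCosetReps K Kc m) {α : ι → G} (hα : IsDoubleCosetReps P K α)
    (hφ : ∀ x, ∀ g ∈ P, ∀ c ∈ Kc, φ (g * x * c) = φ x) :
    ∑ i, (Nat.card (arithStab P K (α i)) : R)⁻¹ * ∑ s, φ (α i * m s) =
      ∑ᶠ q : DoubleCoset.Quotient (P : Set G) Kc,
        (Nat.card (arithStab P Kc q.out) : R)⁻¹ * φ q.out := by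
  classical
  set A : ι → Finset (DoubleCoset.Quotient (P : Set G) Kc) :=
    fun i => univ.image fun s => DoubleCoset.mk P Kc (α i * m s)
  have h_disj : ((univ : Finset ι) : Set ι).PairwiseDisjoint A := by
    intro i _ j _ hij
    refine disjoint_left.2 fun q hqi hqj => ?_
    obtain ⟨s, -, rfl⟩ := mem_image.1 hqi
    obtain ⟨t, -, hts⟩ := mem_image.1 hqj
    obtain ⟨g, hg, c, hc, e⟩ := (DoubleCoset.eq P Kc _ _).1 hts
    refine hij (hα.2 j i ⟨g, hg, m t * c * (m s)⁻¹,
      mul_mem (mul_mem (hm.1 t) (hKc hc)) (inv_mem (hm.1 s)), ?_⟩).symm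
    rw [show g * α j * (m t * c * (m s)⁻¹) = g * (α j * m t) * c * (m s)⁻¹ by group, ← e]
    group
  have h_cover : ∀ q, q ∈ univ.biUnion A := by
    intro q
    obtain ⟨i, g, hg, k, hk, e⟩ := hα.1 q.out
    obtain ⟨s, hs, -⟩ := hm.2 k hk
    refine mem_biUnion.2 ⟨i, mem_univ i, mem_image.2 ⟨s, mem_univ s, ?_⟩⟩
    rw [← DoubleCoset.out_eq' P Kc q, DoubleCoset.eq]
    exact ⟨g, hg, (m s)⁻¹ * k, hs, by rw [e]; group⟩
  rw [finsum_eq_sum_of_support_subset _ (s := univ.biUnion A) fun q _ => h_cover q,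
    sum_biUnion h_disj]
  exact sum_congr rfl fun i _ => inv_natCard_mul_sum_eq_sum_image hKc hm hφ (α i)

end Unfolding

end AlgebraicModularForms

theorem stmt16_general {G : Type*} [Group G] (P K₁ K₂ : Subgroup G)
    {V : Type*} [AddCommGroup V] [Module ℝ V]
    (ρ : Representation ℝ P V)
    (β : V →ₗ[ℝ] V →ₗ[ℝ] ℝ)
    (hβinv : ∀ (g : P) (v w : V), β (ρ g v) (ρ g w) = β v w)
    (IsMF₁ IsMF₂ : (G → V) → Prop)
    (hIsMF₁ : ∀ f : G → V, IsMF₁ f ↔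
      ∀ (g : P) (γ : G) (k : K₁), f ((g : G) * γ * (k : G)) = ρ g (f γ))
    (hIsMF₂ : ∀ f : G → V, IsMF₂ f ↔
      ∀ (g : P) (γ : G) (k : K₂), f ((g : G) * γ * (k : G)) = ρ g (f γ))
    {I J : Type*} [Fintype I] [Fintype J]
    (m : I → G) (l : J → G) (hm : ∀ i, m i ∈ K₂) (hl : ∀ j, l j ∈ K₁)
    (hmdec : ∀ x ∈ K₂, ∃! i, (m i)⁻¹ * x ∈ K₁ ⊓ K₂)
    (hldec : ∀ x ∈ K₁, ∃! j, (l j)⁻¹ * x ∈ K₁ ⊓ K₂)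
    (T12 : (G → V) → (G → V)) (hT12 : ∀ f γ, T12 f γ = ∑ i, f (γ * m i))
    (T21 : (G → V) → (G → V)) (hT21 : ∀ f γ, T21 f γ = ∑ j, f (γ * l j))
    (h₁ h₂ : ℕ) (α₁ : Fin h₁ → G) (α₂ : Fin h₂ → G)
    (hcov₁ : ∀ x : G, ∃ i, ∃ g ∈ P, ∃ k ∈ K₁, x = g * α₁ i * k)
    (hdisj₁ : ∀ i j, (∃ g ∈ P, ∃ k ∈ K₁, α₁ j = g * α₁ i * k) → i = j)
    (hcov₂ : ∀ x : G, ∃ i, ∃ g ∈ P, ∃ k ∈ K₂, x = g * α₂ i * k)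
    (hdisj₂ : ∀ i j, (∃ g ∈ P, ∃ k ∈ K₂, α₂ j = g * α₂ i * k) → i = j) :
    -- T¹₂ maps M(V,K₁) to M(V,K₂)
    (∀ f : G → V, IsMF₁ f → IsMF₂ (T12 f)) ∧
    -- independence of the choice of the mᵢ
    (∀ {I' : Type} [Fintype I'] (m' : I' → G), (∀ i', m' i' ∈ K₂) →
      (∀ x ∈ K₂, ∃! i', (m' i')⁻¹ * x ∈ K₁ ⊓ K₂) →
      ∀ f : G → V, IsMF₁ f → ∀ γ : G, T12 f γ = ∑ i', f (γ * m' i')) ∧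
    -- adjointness with respect to the Petersson inner products
    (∀ f f' : G → V, IsMF₁ f → IsMF₂ f' →
      ∑ i, (Nat.card {g : P // (α₂ i)⁻¹ * (g : G) * α₂ i ∈ K₂} : ℝ)⁻¹ *
          β (T12 f (α₂ i)) (f' (α₂ i)) =
        ∑ i, (Nat.card {g : P // (α₁ i)⁻¹ * (g : G) * α₁ i ∈ K₁} : ℝ)⁻¹ *
          β (f (α₁ i)) (T21 f' (α₁ i))) := by
  have hm' : IsCosetReps K₂ (K₁ ⊓ K₂) m := ⟨hm, hmdec⟩
  have hl' : IsCosetReps K₁ (K₁ ⊓ K₂) l := ⟨hl, hldec⟩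
  have hMF₁ : ∀ f, IsMF₁ f → IsAlgModularForm ρ K₁ f := fun f => (hIsMF₁ f).1
  have hMF₂ : ∀ f, IsMF₂ f → IsAlgModularForm ρ K₂ f := fun f => (hIsMF₂ f).1
  refine ⟨fun f hf => ?_, fun m' hm'K hm'dec f hf γ => ?_, fun f f' hf hf' => ?_⟩
  · rw [hIsMF₂, show T12 f = fun γ => ∑ i, f (γ * m i) from funext (hT12 f)]
    exact ((hMF₁ f hf).mono inf_le_left).sum_mul_reps hm'
  · simpa only [hT12, mul_one] using hm'.sum_mul_eq ⟨hm'K, hm'dec⟩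
      (fun γ c hc => (hMF₁ f hf).map_mul_right γ (Subgroup.mem_inf.1 hc).1) (one_mem K₂) γ
  · have hφ : ∀ x, ∀ g ∈ P, ∀ c ∈ K₁ ⊓ K₂,
        β (f (g * x * c)) (f' (g * x * c)) = β (f x) (f' x) := fun x g hg c hc =>
      ((hMF₁ f hf).mono inf_le_left).bilin_apply_mul_mul hβinv
        ((hMF₂ f' hf').mono inf_le_right) x hg hc
    have hL : ∀ x, β (T12 f x) (f' x) = ∑ s, β (f (x * m s)) (f' (x * m s)) := fun x => by
      simp only [hT12, map_sum, LinearMap.sum_apply, (hMF₂ f' hf').map_mul_right _ (hm _)]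
    have hR : ∀ x, β (f x) (T21 f' x) = ∑ t, β (f (x * l t)) (f' (x * l t)) := fun x => by
      simp only [hT21, map_sum, (hMF₁ f hf).map_mul_right _ (hl _)]
    simp only [hL, hR]
    exact (sum_inv_natCard_mul_sum_eq_finsum (φ := fun x => β (f x) (f' x)) inf_le_right hm'
      ⟨hcov₂, hdisj₂⟩ hφ).trans
      (sum_inv_natCard_mul_sum_eq_finsum (φ := fun x => β (f x) (f' x)) inf_le_left hl'
      ⟨hcov₁, hdisj₁⟩ hφ).symm

/-- The intertwining operator
`(T¹₂f)(γ) = Σ_i f(γ m_i)` (where `K₂ = ⊔_i m_i(K₁∩K₂)`) is well defined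
(independent of the chosen representatives `m_i`), maps `M(V,K₁)` into
`M(V,K₂)`, and is adjoint to `T²₁` with respect to the Petersson products:
`⟨T¹₂f, f'⟩_{M₂} = ⟨f, T²₁f'⟩_{M₁}`. -/
theorem stmt16 {G : Type*} [Group G] (P K₁ K₂ : Subgroup G)
    {V : Type*} [AddCommGroup V] [Module ℝ V]
    (ρ : Representation ℝ P V)
    (β : V →ₗ[ℝ] V →ₗ[ℝ] ℝ)
    (hβsymm : ∀ v w : V, β v w = β w v)
    (hβpos : ∀ v : V, v ≠ 0 → 0 < β v v)
    (hβinv : ∀ (g : P) (v w : V), β (ρ g v) (ρ g w) = β v w)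
    (IsMF₁ IsMF₂ : (G → V) → Prop)
    (hIsMF₁ : ∀ f : G → V, IsMF₁ f ↔
      ∀ (g : P) (γ : G) (k : K₁), f ((g : G) * γ * (k : G)) = ρ g (f γ))
    (hIsMF₂ : ∀ f : G → V, IsMF₂ f ↔
      ∀ (g : P) (γ : G) (k : K₂), f ((g : G) * γ * (k : G)) = ρ g (f γ))
    {I J : Type*} [Fintype I] [Fintype J]
    (m : I → G) (l : J → G) (hm : ∀ i, m i ∈ K₂) (hl : ∀ j, l j ∈ K₁)
    (hmdec : ∀ x ∈ K₂, ∃! i, (m i)⁻¹ * x ∈ K₁ ⊓ K₂)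
    (hldec : ∀ x ∈ K₁, ∃! j, (l j)⁻¹ * x ∈ K₁ ⊓ K₂)
    (T12 : (G → V) → (G → V)) (hT12 : ∀ f γ, T12 f γ = ∑ i, f (γ * m i))
    (T21 : (G → V) → (G → V)) (hT21 : ∀ f γ, T21 f γ = ∑ j, f (γ * l j))
    (h₁ h₂ : ℕ) (α₁ : Fin h₁ → G) (α₂ : Fin h₂ → G)
    (hcov₁ : ∀ x : G, ∃ i, ∃ g ∈ P, ∃ k ∈ K₁, x = g * α₁ i * k)
    (hdisj₁ : ∀ i j, (∃ g ∈ P, ∃ k ∈ K₁, α₁ j = g * α₁ i * k) → i = j)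
    (hcov₂ : ∀ x : G, ∃ i, ∃ g ∈ P, ∃ k ∈ K₂, x = g * α₂ i * k)
    (hdisj₂ : ∀ i j, (∃ g ∈ P, ∃ k ∈ K₂, α₂ j = g * α₂ i * k) → i = j)
    (hΓfin₁ : ∀ x : G, 0 < Nat.card {g : P // x⁻¹ * (g : G) * x ∈ K₁})
    (hΓfin₂ : ∀ x : G, 0 < Nat.card {g : P // x⁻¹ * (g : G) * x ∈ K₂}) :
    -- T¹₂ maps M(V,K₁) to M(V,K₂)
    (∀ f : G → V, IsMF₁ f → IsMF₂ (T12 f)) ∧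
    -- independence of the choice of the mᵢ
    (∀ {I' : Type} [Fintype I'] (m' : I' → G), (∀ i', m' i' ∈ K₂) →
      (∀ x ∈ K₂, ∃! i', (m' i')⁻¹ * x ∈ K₁ ⊓ K₂) →
      ∀ f : G → V, IsMF₁ f → ∀ γ : G, T12 f γ = ∑ i', f (γ * m' i')) ∧
    -- adjointness with respect to the Petersson inner products
    (∀ f f' : G → V, IsMF₁ f → IsMF₂ f' →
      ∑ i, (Nat.card {g : P // (α₂ i)⁻¹ * (g : G) * α₂ i ∈ K₂} : ℝ)⁻¹ *
          β (T12 f (α₂ i)) (f' (α₂ i)) =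
        ∑ i, (Nat.card {g : P // (α₁ i)⁻¹ * (g : G) * α₁ i ∈ K₁} : ℝ)⁻¹ *
          β (f (α₁ i)) (T21 f' (α₁ i))) :=
  stmt16_general P K₁ K₂ ρ β hβinv IsMF₁ IsMF₂ hIsMF₁ hIsMF₂ m l hm hl hmdec hldec T12 hT12 T21 hT21
    h₁ h₂ α₁ α₂ hcov₁ hdisj₁ hcov₂ hdisj₂
end
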